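/- Let F : 2^[n] → ℝ be a submodular function with F(∅) = 0 and let f be its Lovász extension. Then f is a convex function on [0,1]^n. -/

import Mathlib

open Finset

/-- A set function on subsets of `Fin n` is submodular (diminishing returns). -/
def Submodular {n : ℕ} (F : Finset (Fin n) → ℝ) : Prop :=
  ∀ ⦃A B : Finset (Fin n)⦄, A ⊆ B → ∀ i ∉ B,
    F (insert i A) - F A ≥ F (insert i B) - F B

/-- `P` is the permutation consistent with `x`: coordinates in nonincreasing order,
ties broken by increasing index. -/
def Consistent {n : ℕ} (x : Fin n → ℝ) (P : Equiv.Perm (Fin n)) : Prop :=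
  ∀ i j : Fin n, i ≤ j → x (P i) ≥ x (P j) ∧ (x (P i) = x (P j) → P i ≤ P j)

/-- `P[k] = {P_1, …, P_k}` (0-indexed: the images of positions `< k`). -/
def prefixSet {n : ℕ} (P : Equiv.Perm (Fin n)) (k : ℕ) : Finset (Fin n) :=
  (Finset.univ.filter (fun i : Fin n => (i : ℕ) < k)).image P

/-- The Lovász extension of `F` at `x`, expressed via the permutation `P` consistent
with `x`. -/
def lovaszExt {n : ℕ} (F : Finset (Fin n) → ℝ) (P : Equiv.Perm (Fin n))
    (x : Fin n → ℝ) : ℝ :=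
  ∑ i : Fin n, (F (prefixSet P ((i : ℕ) + 1)) - F (prefixSet P (i : ℕ))) * x (P i)

/-- The Lovász subgradient at `x`: `g(x)_{P_i} = F(P[i]) - F(P[i-1])`. -/
def lovaszGrad {n : ℕ} (F : Finset (Fin n) → ℝ) (P : Equiv.Perm (Fin n)) :
    Fin n → ℝ :=
  fun j => F (prefixSet P ((P.symm j : ℕ) + 1)) - F (prefixSet P ((P.symm j : ℕ)))

/-!
For every permutation `Q`, the vector `lovaszGrad F Q` sums to `F (Q[k]) - F ∅` on each prefix
`Q[k]`, and, by submodularity, to at most `F S - F ∅` on every set `S`. Summing `g ⬝ᵥ x` by parts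
along the permutation `P` consistent with `x` expresses it through the prefix sums `g (P[k])`
with the nonnegative weights `x_{P_k} - x_{P_{k+1}}`, plus a multiple of the total `g [n]`, on
which all these vectors agree. Hence the Lovász extension is the pointwise maximum of the linear
maps `x ↦ lovaszGrad F Q ⬝ᵥ x`, and so is convex.
-/

theorem convexOn_of_forall_exists_linearMap_le {𝕜 E β : Type*} [Semiring 𝕜] [PartialOrder 𝕜]
    [AddCommMonoid E] [AddCommMonoid β] [PartialOrder β] [IsOrderedAddMonoid β]
    [Module 𝕜 E] [Module 𝕜 β] [PosSMulMono 𝕜 β] {s : Set E} {f : E → β}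
    (hs : Convex 𝕜 s) (h : ∀ z ∈ s, ∃ ℓ : E →ₗ[𝕜] β, ℓ z = f z ∧ ∀ x ∈ s, ℓ x ≤ f x) :
    ConvexOn 𝕜 s f := by
  refine ⟨hs, fun x hx y hy a b ha hb hab => ?_⟩
  obtain ⟨ℓ, hℓz, hℓ⟩ := h _ (hs hx hy ha hb hab)
  calc f (a • x + b • y) = a • ℓ x + b • ℓ y := by rw [← hℓz, map_add, map_smul, map_smul]
    _ ≤ a • f x + b • f y := by gcongr <;> exact hℓ _ ‹_›

section LovaszExtension

variable {n : ℕ}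

lemma mem_prefixSet (P : Equiv.Perm (Fin n)) (k : ℕ) (j : Fin n) :
    j ∈ prefixSet P k ↔ (P.symm j : ℕ) < k := by
  simp only [prefixSet, mem_image, mem_filter, mem_univ, true_and]
  exact ⟨by rintro ⟨i, hi, rfl⟩; simpa using hi, fun h => ⟨P.symm j, h, P.apply_symm_apply j⟩⟩

lemma prefixSet_zero (P : Equiv.Perm (Fin n)) : prefixSet P 0 = ∅ := by
  ext j; simp [mem_prefixSet]

lemma prefixSet_eq_univ (P : Equiv.Perm (Fin n)) {k : ℕ} (hk : n ≤ k) : prefixSet P k = univ := by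
  ext j; simpa [mem_prefixSet] using (P.symm j).isLt.trans_le hk

lemma prefixSet_succ (P : Equiv.Perm (Fin n)) {k : ℕ} (hk : k < n) :
    prefixSet P (k + 1) = insert (P ⟨k, hk⟩) (prefixSet P k) := by
  ext j
  rw [mem_insert, mem_prefixSet, mem_prefixSet, Nat.lt_succ_iff_lt_or_eq, or_comm,
    ← Equiv.symm_apply_eq, Fin.ext_iff]

lemma lovaszGrad_apply (F : Finset (Fin n) → ℝ) (P : Equiv.Perm (Fin n)) {k : ℕ} (hk : k < n) :
    lovaszGrad F P (P ⟨k, hk⟩) = F (prefixSet P (k + 1)) - F (prefixSet P k) := by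
  simp [lovaszGrad]

lemma lovaszExt_eq_dotProduct (F : Finset (Fin n) → ℝ) (P : Equiv.Perm (Fin n))
    (x : Fin n → ℝ) : lovaszExt F P x = lovaszGrad F P ⬝ᵥ x := by
  rw [lovaszExt, dotProduct, ← Equiv.sum_comp P (fun j => lovaszGrad F P j * x j)]
  simp [lovaszGrad]

lemma sum_lovaszGrad_prefixSet (F : Finset (Fin n) → ℝ) (P : Equiv.Perm (Fin n)) {k : ℕ}
    (hk : k ≤ n) : ∑ j ∈ prefixSet P k, lovaszGrad F P j = F (prefixSet P k) - F ∅ := by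
  induction k with
  | zero => simp [prefixSet_zero]
  | succ k ih =>
    have hk' : k < n := hk
    rw [prefixSet_succ P hk', sum_insert (by simp [mem_prefixSet]), ih hk'.le,
      ← prefixSet_succ P hk', lovaszGrad_apply]
    ring

lemma Submodular.sum_lovaszGrad_inter_prefixSet_le {F : Finset (Fin n) → ℝ} (hF : Submodular F)
    (Q : Equiv.Perm (Fin n)) (S : Finset (Fin n)) {k : ℕ} (hk : k ≤ n) :
    ∑ j ∈ prefixSet Q k ∩ S, lovaszGrad F Q j ≤ F (prefixSet Q k ∩ S) - F ∅ := by
  induction k with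
  | zero => simp [prefixSet_zero]
  | succ k ih =>
    have hk' : k < n := hk
    have hnotMem : Q ⟨k, hk'⟩ ∉ prefixSet Q k := by simp [mem_prefixSet]
    rw [prefixSet_succ Q hk']
    by_cases hS : Q ⟨k, hk'⟩ ∈ S
    · rw [insert_inter_of_mem hS, sum_insert (fun h => hnotMem (mem_inter.1 h).1),
        lovaszGrad_apply, prefixSet_succ Q hk']
      have hdiminish := hF (inter_subset_left (s₂ := S)) _ hnotMem
      linarith [ih hk'.le]
    · rw [insert_inter_of_notMem hS]
      exact ih hk'.le

lemma Submodular.sum_lovaszGrad_le {F : Finset (Fin n) → ℝ} (hF : Submodular F)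
    (Q : Equiv.Perm (Fin n)) (S : Finset (Fin n)) :
    ∑ j ∈ S, lovaszGrad F Q j ≤ F S - F ∅ := by
  simpa [prefixSet_eq_univ] using hF.sum_lovaszGrad_inter_prefixSet_le Q S le_rfl

noncomputable def permSeq (P : Equiv.Perm (Fin n)) (x : Fin n → ℝ) (k : ℕ) : ℝ :=
  if h : k < n then x (P ⟨k, h⟩) else 0

lemma permSeq_mul (P : Equiv.Perm (Fin n)) (x y : Fin n → ℝ) (k : ℕ) :
    permSeq P (x * y) k = permSeq P x k * permSeq P y k := by
  unfold permSeq; split_ifs <;> simp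

lemma sum_range_permSeq (P : Equiv.Perm (Fin n)) (y : Fin n → ℝ) {k : ℕ} (hk : k ≤ n) :
    ∑ i ∈ range k, permSeq P y i = ∑ j ∈ prefixSet P k, y j := by
  induction k with
  | zero => simp [prefixSet_zero]
  | succ k ih =>
    have hk' : k < n := hk
    rw [sum_range_succ, ih hk'.le, prefixSet_succ P hk', sum_insert (by simp [mem_prefixSet]),
      permSeq, dif_pos hk', add_comm]

lemma dotProduct_eq_sum_by_parts (P : Equiv.Perm (Fin n)) (x y : Fin n → ℝ) :
    y ⬝ᵥ x = permSeq P x (n - 1) * ∑ j ∈ prefixSet P n, y j +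
      ∑ i ∈ range (n - 1),
        (permSeq P x i - permSeq P x (i + 1)) * ∑ j ∈ prefixSet P (i + 1), y j := by
  have hdot : y ⬝ᵥ x = ∑ i ∈ range n, permSeq P x i * permSeq P y i := by
    simp_rw [← permSeq_mul, sum_range_permSeq P _ le_rfl, prefixSet_eq_univ P le_rfl, dotProduct,
      Pi.mul_apply, mul_comm]
  have hby_parts := sum_range_by_parts (permSeq P x) (permSeq P y) n
  simp only [smul_eq_mul] at hby_parts
  rw [hdot, hby_parts, sum_range_permSeq P y le_rfl, sub_eq_add_neg, ← sum_neg_distrib]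
  congr 1
  refine sum_congr rfl fun i hi => ?_
  rw [sum_range_permSeq P y (by have := mem_range.1 hi; omega)]
  ring

lemma Consistent.permSeq_succ_le {x : Fin n → ℝ} {P : Equiv.Perm (Fin n)} (hP : Consistent x P)
    {i : ℕ} (hi : i + 1 < n) : permSeq P x (i + 1) ≤ permSeq P x i := by
  rw [permSeq, permSeq, dif_pos hi, dif_pos (by omega)]
  exact (hP ⟨i, by omega⟩ ⟨i + 1, hi⟩ (Fin.le_def.2 (Nat.le_succ i))).1

lemma Submodular.dotProduct_lovaszGrad_le {F : Finset (Fin n) → ℝ} (hF : Submodular F)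
    {x : Fin n → ℝ} {P : Equiv.Perm (Fin n)} (hP : Consistent x P) (Q : Equiv.Perm (Fin n)) :
    lovaszGrad F Q ⬝ᵥ x ≤ lovaszExt F P x := by
  have htotal :
      ∑ j ∈ prefixSet P n, lovaszGrad F Q j = ∑ j ∈ prefixSet P n, lovaszGrad F P j := by
    rw [sum_lovaszGrad_prefixSet F P le_rfl, prefixSet_eq_univ P le_rfl,
      ← prefixSet_eq_univ Q le_rfl, sum_lovaszGrad_prefixSet F Q le_rfl]
  rw [lovaszExt_eq_dotProduct, dotProduct_eq_sum_by_parts P x, dotProduct_eq_sum_by_parts P x,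
    htotal]
  refine add_le_add le_rfl (sum_le_sum fun i hi => ?_)
  have hin : i + 1 < n := by have := mem_range.1 hi; omega
  rw [sum_lovaszGrad_prefixSet F P hin.le]
  exact mul_le_mul_of_nonneg_left (hF.sum_lovaszGrad_le Q _)
    (sub_nonneg.2 (hP.permSeq_succ_le hin))

lemma exists_consistent (x : Fin n → ℝ) : ∃ P, Consistent x P := by
  obtain ⟨hmono, htie⟩ := (Tuple.eq_sort_iff (f := fun i => -x i)).1 rfl
  refine ⟨Tuple.sort (fun i => -x i), fun i j hij => ⟨?_, fun heq => ?_⟩⟩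
  · simpa using hmono hij
  · rcases hij.eq_or_lt with rfl | hlt
    · exact le_rfl
    · exact (htie i j hlt (neg_inj.2 heq)).le

end LovaszExtension

theorem lovaszExt_convexOn_general {n : ℕ} (F : Finset (Fin n) → ℝ)
    (hsub : Submodular F)
    (f : (Fin n → ℝ) → ℝ)
    (hf : ∀ x : Fin n → ℝ, (∀ i, x i ∈ Set.Icc (0 : ℝ) 1) →
      ∀ P : Equiv.Perm (Fin n), Consistent x P → f x = lovaszExt F P x) :
    ConvexOn ℝ {x : Fin n → ℝ | ∀ i, x i ∈ Set.Icc (0 : ℝ) 1} f := by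
  have hcube : Convex ℝ {x : Fin n → ℝ | ∀ i, x i ∈ Set.Icc (0 : ℝ) 1} := by
    simpa [Set.pi] using convex_pi (s := Set.univ) fun _ _ => convex_Icc (0 : ℝ) 1
  refine convexOn_of_forall_exists_linearMap_le hcube fun z hz => ?_
  obtain ⟨P, hP⟩ := exists_consistent z
  refine ⟨dotProductBilin ℝ ℝ (lovaszGrad F P), ?_, fun x hx => ?_⟩
  · simp [hf z hz P hP, lovaszExt_eq_dotProduct]
  · obtain ⟨Px, hPx⟩ := exists_consistent x
    rw [hf x hx Px hPx]
    exact hsub.dotProduct_lovaszGrad_le hPx P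

/-- The Lovász extension of a submodular function is convex on `[0,1]^n`. -/
theorem lovaszExt_convexOn {n : ℕ} (F : Finset (Fin n) → ℝ)
    (hsub : Submodular F) (h0 : F ∅ = 0)
    (f : (Fin n → ℝ) → ℝ)
    (hf : ∀ x : Fin n → ℝ, (∀ i, x i ∈ Set.Icc (0 : ℝ) 1) →
      ∀ P : Equiv.Perm (Fin n), Consistent x P → f x = lovaszExt F P x) :
    ConvexOn ℝ {x : Fin n → ℝ | ∀ i, x i ∈ Set.Icc (0 : ℝ) 1} f :=
  lovaszExt_convexOn_general F hsub f hf
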